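/- arXiv:1405.5917 — 3 statements merged into one kernel-verified Lean document; each statement's English description precedes it below -/
import Mathlib

section
/- Let c, p, q, r be integers with 1 ≤ p ≤ c, c = q·p + r and 0 ≤ r < p (so q ≥ 1). Then, in the rational numbers, (c−p)/c + (p−r)/p > 1 − 1/(q+1), and moreover 1 − 1/(q+1) ≥ 1/2. -/
/-- For integers `1 ≤ p ≤ c` with `c = q·p + r`, `0 ≤ r < p`, one has
`(c-p)/c + (p-r)/p > 1 - 1/(q+1)` and `1 - 1/(q+1) ≥ 1/2` in `ℚ`. -/
theorem inductance_ineq (c p q r : ℤ) (hp : 1 ≤ p) (hpc : p ≤ c)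
    (hdiv : c = q * p + r) (hr0 : 0 ≤ r) (hrp : r < p) :
    ((c : ℚ) - (p : ℚ)) / (c : ℚ) + ((p : ℚ) - (r : ℚ)) / (p : ℚ)
        > 1 - 1 / ((q : ℚ) + 1) ∧
      1 - 1 / ((q : ℚ) + 1) ≥ 1 / 2 := by
  have hq : (1:ℤ) ≤ q := by nlinarith
  have hpQ : (0:ℚ) < (p:ℚ) := by exact_mod_cast lt_of_lt_of_le zero_lt_one hp
  have hcQ : (0:ℚ) < (c:ℚ) := by exact_mod_cast lt_of_lt_of_le zero_lt_one (hp.trans hpc)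
  have hqQ : (1:ℚ) ≤ (q:ℚ) := by exact_mod_cast hq
  have hq1 : (0:ℚ) < (q:ℚ) + 1 := by linarith
  have hdivQ : (c:ℚ) = q * p + r := by exact_mod_cast hdiv
  have hrpQ : (r:ℚ) < p := by exact_mod_cast hrp
  have hr0Q : (0:ℚ) ≤ (r:ℚ) := by exact_mod_cast hr0
  have hpcQ : (p:ℚ) ≤ c := by exact_mod_cast hpc
  constructor
  · rw [gt_iff_lt, ← sub_pos]
    have h : ((c:ℚ) - p) / c + ((p:ℚ) - r) / p - (1 - 1 / ((q:ℚ) + 1)) =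
        (((c:ℚ) - p) * p * ((q:ℚ)+1) + ((p:ℚ) - r) * c * ((q:ℚ)+1)
          - (((q:ℚ)+1) - 1) * (c * p)) / (c * p * ((q:ℚ)+1)) := by
      field_simp
    rw [h]
    apply div_pos _ (by positivity)
    have hA : 0 < ((q:ℚ)*(q:ℚ))*((p:ℚ)*((p:ℚ)-r)) := by
      have hq0 : (0:ℚ) < (q:ℚ) := by linarith
      exact mul_pos (mul_pos hq0 hq0) (mul_pos hpQ (by linarith))
    have hB : 0 ≤ ((q:ℚ)-1)*((((p:ℚ)-r))*((p:ℚ)+r)) := by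
      apply mul_nonneg (by linarith)
      apply mul_nonneg (by linarith) (by linarith)
    have hC : 0 ≤ (r:ℚ)*((p:ℚ)-r) := mul_nonneg hr0Q (by linarith)
    rw [hdivQ]
    nlinarith [hA, hB, hC]
  · have h2 : 1/((q:ℚ)+1) ≤ 1/2 := by
      apply one_div_le_one_div_of_le (by norm_num) (by linarith)
    linarith
end

section
/- Let Q be a weight list which contracts to a smooth point and contains a unique (−1)-curve. If K·Q < 0, then, up to reversal, Q = [(2)_k, 1] for some integer k ≥ 0. -/
/-- One contraction move on a weight list: an entry equal to `1` (representing a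
`(-1)`-curve) is removed and the weights of its neighbours are decreased by one. -/
inductive ContractionStep : List ℤ → List ℤ → Prop
  | mid (L R : List ℤ) (a b : ℤ) :
      ContractionStep (L ++ a :: 1 :: b :: R) (L ++ (a - 1) :: (b - 1) :: R)
  | head (b : ℤ) (R : List ℤ) :
      ContractionStep (1 :: b :: R) ((b - 1) :: R)
  | last (L : List ℤ) (a : ℤ) :
      ContractionStep (L ++ [a, 1]) (L ++ [a - 1])
  | single : ContractionStep [1] []

/-- A weight list contracts to a smooth point if some finite sequence of
contraction moves transforms it into the empty list. -/
def ContractsToPoint (Q : List ℤ) : Prop :=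
  Relation.ReflTransGen ContractionStep Q []

/-- `K·Q = Σᵢ (aᵢ - 2)`, the intersection of the chain with the canonical divisor. -/
def kDot (Q : List ℤ) : ℤ := (Q.map (fun a => a - 2)).sum

lemma kDot_nil : kDot [] = 0 := rfl

lemma kDot_cons (a : ℤ) (l : List ℤ) : kDot (a :: l) = a - 2 + kDot l := by
  simp [kDot]

lemma kDot_append (l m : List ℤ) : kDot (l ++ m) = kDot l + kDot m := by
  simp [kDot]

lemma step_mem_one {A B : List ℤ} (h : ContractionStep A B) : (1 : ℤ) ∈ A := by
  cases h <;> simp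

lemma phi_nonneg {L : List ℤ} (h : ContractsToPoint L) :
    0 ≤ kDot L + (if L = [] then 0 else 1) := by
  induction h using Relation.ReflTransGen.head_induction_on with
  | refl => simp [kDot_nil]
  | head hstep hpath ih =>
    cases hstep with
    | mid L' R a b =>
      simp only [kDot_append, kDot_cons] at ih ⊢
      simp only [List.append_eq_nil_iff, List.cons_ne_nil, and_false, if_false] at ih ⊢
      omega
    | head b R =>
      simp only [kDot_cons, List.cons_ne_nil, if_false] at ih ⊢
      omega
    | last L' a =>
      simp only [kDot_append, kDot_cons, kDot_nil, List.append_eq_nil_iff,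
        List.cons_ne_nil, and_false, if_false] at ih ⊢
      omega
    | single =>
      simp [kDot_cons, kDot_nil]

lemma main_shape {L : List ℤ} (h : ContractsToPoint L) :
    L.count 1 = 1 → kDot L ≤ -1 →
    ∃ k : ℕ, L = 1 :: List.replicate k 2 ∨ L = List.replicate k 2 ++ [1] := by
  induction h using Relation.ReflTransGen.head_induction_on with
  | refl => intro hc _; simp at hc
  | head hstep hpath ih =>
    intro hc hk
    cases hstep with
    | single => exact ⟨0, Or.inl rfl⟩
    | mid L' R a b =>
      exfalso
      have h1 := phi_nonneg hpath
      simp only [List.append_eq_nil_iff, List.cons_ne_nil, and_false, if_false,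
        kDot_append, kDot_cons] at h1
      simp only [kDot_append, kDot_cons] at hk
      omega
    | head b R =>
      simp only [List.count_cons, kDot_cons] at hc hk
      have hR : R.count 1 = 0 ∧ ¬ (b = 1) := by
        by_cases hb : b = 1 <;> simp [hb] at hc <;> omega
      have hb2 : b = 2 := by
        by_contra hb2
        have hne : (b - 1) :: R ≠ [] := by simp
        rcases Relation.ReflTransGen.cases_head hpath with heq | ⟨c, hc1, _⟩
        · exact hne heq
        · have := step_mem_one hc1
          rcases List.mem_cons.mp this with h' | h'
          · omega
          · have := List.count_pos_iff.mpr h'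
            omega
      subst hb2
      have hcM : ((2 - 1 : ℤ) :: R).count 1 = 1 := by
        simp [List.count_cons, hR.1]
      have hkM : kDot ((2 - 1 : ℤ) :: R) ≤ -1 := by
        simp only [kDot_cons]; omega
      obtain ⟨k, hM | hM⟩ := ih hcM hkM
      · refine ⟨k + 1, Or.inl ?_⟩
        have : R = List.replicate k 2 := by
          norm_num at hM
          exact hM
        rw [this, List.replicate_succ]
      · cases k with
        | zero =>
          simp at hM
          refine ⟨1, Or.inl ?_⟩
          norm_num at hM
          simp [hM]
        | succ k =>
          exfalso
          rw [List.replicate_succ] at hM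
          norm_num at hM
    | last L' a =>
      have hcount : L'.count 1 = 0 ∧ ¬ (a = 1) := by
        simp only [List.count_append, List.count_cons, List.count_nil] at hc
        by_cases ha : a = 1 <;> simp [ha] at hc <;> omega
      simp only [kDot_append, kDot_cons, kDot_nil] at hk
      have ha2 : a = 2 := by
        by_contra ha2
        have hne : L' ++ [a - 1] ≠ [] := by simp
        rcases Relation.ReflTransGen.cases_head hpath with heq | ⟨c, hc1, _⟩
        · exact hne heq
        · have hmem := step_mem_one hc1
          rcases List.mem_append.mp hmem with h' | h'
          · have := List.count_pos_iff.mpr h'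
            omega
          · simp at h'
            omega
      subst ha2
      have hcM : (L' ++ [(2 : ℤ) - 1]).count 1 = 1 := by
        simp [List.count_append, hcount.1]
      have hkM : kDot (L' ++ [(2 : ℤ) - 1]) ≤ -1 := by
        simp only [kDot_append, kDot_cons, kDot_nil]; omega
      obtain ⟨k, hM | hM⟩ := ih hcM hkM
      · cases k with
        | zero =>
          simp at hM
          refine ⟨1, Or.inr ?_⟩
          norm_num at hM
          simp [hM]
        | succ k =>
          exfalso
          rw [List.replicate_succ'] at hM
          have := congrArg List.getLast? hM
          norm_num at hM
          rw [show (1 : ℤ) :: (List.replicate k 2 ++ [2]) = (1 :: List.replicate k 2) ++ [2] from rfl] at hM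
          have h2 := List.append_inj' hM (by simp)
          have := h2.2
          simp at this
      · refine ⟨k + 1, Or.inr ?_⟩
        norm_num at hM
        rw [hM, List.replicate_succ']
        simp

lemma rev_shape (k : ℕ) :
    (List.replicate k (2:ℤ) ++ [1]).reverse = 1 :: List.replicate k 2 := by
  induction k with
  | zero => rfl
  | succ k ih =>
    rw [List.replicate_succ, List.cons_append, List.reverse_cons, ih,
      List.cons_append, ← List.replicate_succ', List.replicate_succ]

/-- If a weight list contracts to a smooth point, contains a unique `(-1)`-curve
and `K·Q < 0`, then up to reversal `Q = [(2)_k, 1]` for some `k ≥ 0`. -/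
theorem chain_KQ_neg (Q : List ℤ) (hQ : ContractsToPoint Q)
    (huniq : Q.count 1 = 1) (hK : kDot Q < 0) :
    ∃ k : ℕ, Q = List.replicate k 2 ++ [1] ∨
      Q = (List.replicate k 2 ++ [1]).reverse := by
  obtain ⟨k, h | h⟩ := main_shape hQ huniq (by omega)
  · refine ⟨k, Or.inr ?_⟩
    rw [h]
    simp
    rw [← List.map_eq_flatMap, List.map_replicate]
    norm_num
  · exact ⟨k, Or.inl h⟩
end

section
/- Let Q be a weight list which contracts to a smooth point and contains a unique (−1)-curve. Then, up to reversal, Q is of one of the following two types: (1) Q = [m_{2k}+3, (2)_{m_{2k−1}}, m_{2k−2}+3, (2)_{m_{2k−3}}, …, m_2+3, (2)_{m_1}, 1, m_1+2, (2)_{m_2}, m_3+3, (2)_{m_4}, …, m_{2k−1}+3, (2)_{m_{2k}}, 3, (2)_x] for some integers k ≥ 1, x ≥ −1 and m_1,…,m_{2k} ≥ 0, where by convention the trailing segment '3, (2)_x' is omitted when x = −1 (i.e. [3,(2)_{−1}] denotes the empty segment); or (2) Q = [(2)_{m_{2k}}, m_{2k−1}+3, (2)_{m_{2k−2}}, …,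 m_3+3, (2)_{m_2}, m_1+2, 1, (2)_{m_1}, m_2+3, (2)_{m_3}, …, (2)_{m_{2k−1}}, m_{2k}+3, (2)_x] for some integers k ≥ 0, x ≥ 0 and m_1,…,m_{2k} ≥ 0, where for k = 0 this expression degenerates to [1, (2)_x]. -/
/-- The segment `(2)_{m₁}, m₂+3, (2)_{m₃}, m₄+3, …, (2)_{m_{2k-1}}, m_{2k}+3`,
built from the list of pairs `[(m₁,m₂), (m₃,m₄), …, (m_{2k-1},m_{2k})]`. -/
def evenSeg : List (ℕ × ℕ) → List ℤ
  | [] => []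
  | (a, b) :: rest => List.replicate a (2 : ℤ) ++ ((b : ℤ) + 3) :: evenSeg rest

/-- The segment `m₁+3, (2)_{m₂}, m₃+3, (2)_{m₄}, …` (all odd-indexed entries
increased by `3`). -/
def oddSegAux : List (ℕ × ℕ) → List ℤ
  | [] => []
  | (a, b) :: rest => ((a : ℤ) + 3) :: (List.replicate b (2 : ℤ) ++ oddSegAux rest)

/-- The segment `m₁+2, (2)_{m₂}, m₃+3, (2)_{m₄}, …, m_{2k-1}+3, (2)_{m_{2k}}`
(the first entry increased only by `2`). -/
def oddSeg : List (ℕ × ℕ) → List ℤ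
  | [] => []
  | (a, b) :: rest => ((a : ℤ) + 2) :: (List.replicate b (2 : ℤ) ++ oddSegAux rest)

/-- The trailing segment `3, (2)_x` for `x ≥ 0`, which is empty when `x = -1`
(the convention `[3, (2)_{-1}] = ∅`). -/
def tailSeg (x : ℤ) : List ℤ :=
  if x < 0 then [] else (3 : ℤ) :: List.replicate x.toNat (2 : ℤ)

/-- The first type of chain:
`[m_{2k}+3, (2)_{m_{2k-1}}, …, m₂+3, (2)_{m₁}, 1, m₁+2, (2)_{m₂}, m₃+3, …,
 m_{2k-1}+3, (2)_{m_{2k}}, 3, (2)_x]`. -/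
def chainType1 (ps : List (ℕ × ℕ)) (x : ℤ) : List ℤ :=
  (evenSeg ps).reverse ++ 1 :: (oddSeg ps ++ tailSeg x)

/-- The second type of chain:
`[(2)_{m_{2k}}, m_{2k-1}+3, …, m₃+3, (2)_{m₂}, m₁+2, 1, (2)_{m₁}, m₂+3, …,
 (2)_{m_{2k-1}}, m_{2k}+3, (2)_x]`; for `k = 0` it degenerates to `[1, (2)_x]`. -/
def chainType2 (ps : List (ℕ × ℕ)) (x : ℕ) : List ℤ :=
  (oddSeg ps).reverse ++ 1 :: (evenSeg ps ++ List.replicate x (2 : ℤ))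


-- auxiliary defs
def incHead : List ℤ → List ℤ
  | [] => []
  | a :: t => (a + 1) :: t

def Form (A B : List ℤ) : Prop :=
  (∃ (ps : List (ℕ × ℕ)) (x : ℤ), ps ≠ [] ∧ (-1 : ℤ) ≤ x ∧
    ((A = evenSeg ps ∧ B = oddSeg ps ++ tailSeg x) ∨
     (B = evenSeg ps ∧ A = oddSeg ps ++ tailSeg x))) ∨
  (∃ (ps : List (ℕ × ℕ)) (x : ℕ),
    (A = oddSeg ps ∧ B = evenSeg ps ++ List.replicate x 2) ∨
    (B = oddSeg ps ∧ A = evenSeg ps ++ List.replicate x 2))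

lemma form_swap {A B : List ℤ} (h : Form A B) : Form B A := by
  rcases h with ⟨ps, x, h1, h2, h3 | h3⟩ | ⟨ps, x, h3 | h3⟩
  · exact Or.inl ⟨ps, x, h1, h2, Or.inr h3⟩
  · exact Or.inl ⟨ps, x, h1, h2, Or.inl h3⟩
  · exact Or.inr ⟨ps, x, Or.inr h3⟩
  · exact Or.inr ⟨ps, x, Or.inl h3⟩

lemma form_nil : Form [] [] :=
  Or.inr ⟨[], 0, Or.inl ⟨rfl, rfl⟩⟩

lemma lop {A B : List ℤ} (h : Form A B) : Form (incHead A) (2 :: B) := by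
  rcases h with ⟨ps, x, h1, h2, ⟨hA, hB⟩ | ⟨hB, hA⟩⟩ | ⟨ps, x, ⟨hA, hB⟩ | ⟨hB, hA⟩⟩
  · -- T1: A = evenSeg ps, B = oddSeg ps ++ tailSeg x, ps ≠ []
    obtain ⟨⟨a, b⟩, r, rfl⟩ : ∃ p r, ps = p :: r := by
      cases ps with
      | nil => exact absurd rfl h1
      | cons p r => exact ⟨p, r, rfl⟩
    cases a with
    | zero =>
        refine Or.inl ⟨(0, b + 1) :: r, x, by simp, h2, Or.inl ⟨?_, ?_⟩⟩
        · subst hA; simp [evenSeg, incHead]; push_cast; ring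
        · subst hB; simp [oddSeg, oddSegAux, List.replicate_succ]
    | succ a =>
        refine Or.inl ⟨(0, 0) :: (a, b) :: r, x, by simp, h2, Or.inl ⟨?_, ?_⟩⟩
        · subst hA; simp [evenSeg, incHead, List.replicate_succ]
        · subst hB; simp [oddSeg, oddSegAux, List.replicate_succ]; push_cast; ring_nf
  · -- T1 swapped: A = oddSeg ps ++ tailSeg x, B = evenSeg ps
    obtain ⟨⟨a, b⟩, r, rfl⟩ : ∃ p r, ps = p :: r := by
      cases ps with
      | nil => exact absurd rfl h1
      | cons p r => exact ⟨p, r, rfl⟩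
    refine Or.inl ⟨(a + 1, b) :: r, x, by simp, h2, Or.inr ⟨?_, ?_⟩⟩
    · subst hB; simp [evenSeg, List.replicate_succ]
    · subst hA; simp [oddSeg, incHead]; push_cast; ring
  · -- T2: A = oddSeg ps, B = evenSeg ps ++ replicate x 2
    cases ps with
    | nil =>
        refine Or.inr ⟨[], x + 1, Or.inl ⟨?_, ?_⟩⟩
        · subst hA; simp [oddSeg, incHead]
        · subst hB; simp [evenSeg, List.replicate_succ]
    | cons p r =>
        obtain ⟨a, b⟩ := p
        refine Or.inr ⟨(a + 1, b) :: r, x, Or.inl ⟨?_, ?_⟩⟩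
        · subst hA; simp [oddSeg, incHead]; push_cast; ring
        · subst hB; simp [evenSeg, List.replicate_succ]
  · -- T2 swapped: A = evenSeg ps ++ replicate x 2, B = oddSeg ps
    cases ps with
    | nil =>
        cases x with
        | zero =>
            refine Or.inr ⟨[], 1, Or.inl ⟨?_, ?_⟩⟩
            · subst hA; simp [oddSeg, incHead, evenSeg]
            · subst hB; simp [oddSeg, evenSeg]
        | succ n =>
            refine Or.inr ⟨[(0, 0)], n, Or.inr ⟨?_, ?_⟩⟩
            · subst hB; simp [oddSeg, oddSegAux]
            · subst hA; simp [evenSeg, incHead, List.replicate_succ]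
    | cons p r =>
        obtain ⟨a, b⟩ := p
        cases a with
        | zero =>
            refine Or.inr ⟨(0, b + 1) :: r, x, Or.inr ⟨?_, ?_⟩⟩
            · subst hB; simp [oddSeg, oddSegAux, List.replicate_succ]
            · subst hA; simp [evenSeg, incHead]; push_cast; ring_nf
        | succ a =>
            refine Or.inr ⟨(0, 0) :: (a, b) :: r, x, Or.inr ⟨?_, ?_⟩⟩
            · subst hB; simp [oddSeg, oddSegAux, List.replicate_succ]; push_cast; ring_nf
            · subst hA; simp [evenSeg, incHead, List.replicate_succ]



lemma split_one : ∀ (X U : List ℤ) {Y V : List ℤ},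
    X ++ 1 :: Y = U ++ 1 :: V → (1 : ℤ) ∉ X → (1 : ℤ) ∉ U → X = U ∧ Y = V := by
  intro X
  induction X with
  | nil =>
      intro U Y V h hX hU
      cases U with
      | nil => simpa using h
      | cons u U' =>
          simp only [List.nil_append, List.cons_append, List.cons.injEq] at h
          exact absurd (h.1 ▸ (List.mem_cons_self : u ∈ u :: U')) (h.1 ▸ hU)
  | cons x X' ih =>
      intro U Y V h hX hU
      cases U with
      | nil =>
          simp only [List.cons_append, List.nil_append, List.cons.injEq] at h
          exact absurd (h.1 ▸ (List.mem_cons_self : x ∈ x :: X')) (h.1 ▸ hX)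
      | cons u U' =>
          simp only [List.cons_append, List.cons.injEq] at h
          obtain ⟨rfl, h2⟩ := h
          have := ih U' h2 (fun hm => hX (List.mem_cons_of_mem _ hm))
            (fun hm => hU (List.mem_cons_of_mem _ hm))
          exact ⟨by rw [this.1], this.2⟩

lemma pair_locate : ∀ (U X : List ℤ) {Y V : List ℤ} {a b : ℤ},
    X ++ 1 :: 1 :: Y = U ++ a :: 1 :: b :: V →
    a = 1 ∨ b = 1 ∨ (∃ s t, U = s ++ 1 :: 1 :: t) ∨ (∃ s t, V = s ++ 1 :: 1 :: t) := by
  intro U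
  induction U with
  | nil =>
      intro X Y V a b h
      match X, h with
      | [], h => simp only [List.nil_append, List.cons.injEq] at h; exact Or.inl h.1.symm
      | [x], h =>
          simp only [List.cons_append, List.nil_append, List.cons.injEq] at h
          exact Or.inr (Or.inl h.2.2.1.symm)
      | x :: x' :: X'', h =>
          simp only [List.cons_append, List.nil_append, List.cons.injEq] at h
          obtain ⟨rfl, rfl, h3⟩ := h
          match X'', h3 with
          | [], h3 => simp only [List.nil_append, List.cons.injEq] at h3; exact Or.inr (Or.inl h3.1.symm)
          | x'' :: X''', h3 =>
              simp only [List.cons_append, List.cons.injEq] at h3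
              exact Or.inr (Or.inr (Or.inr ⟨X''', Y, h3.2.symm⟩))
  | cons u U' ih =>
      intro X Y V a b h
      match X, h with
      | [], h =>
          simp only [List.nil_append, List.cons_append, List.cons.injEq] at h
          obtain ⟨rfl, h2⟩ := h
          match U', h2 with
          | [], h2 => simp only [List.nil_append, List.cons.injEq] at h2; exact Or.inl h2.1.symm
          | u' :: U'', h2 =>
              simp only [List.cons_append, List.cons.injEq] at h2
              exact Or.inr (Or.inr (Or.inl ⟨[], U'', by rw [← h2.1]; rfl⟩))
      | x :: X', h =>
          simp only [List.cons_append, List.cons.injEq] at h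
          obtain ⟨rfl, h2⟩ := h
          rcases ih X' h2 with h3 | h3 | ⟨s, t, h3⟩ | h3
          · exact Or.inl h3
          · exact Or.inr (Or.inl h3)
          · exact Or.inr (Or.inr (Or.inl ⟨x :: s, t, by rw [h3]; rfl⟩))
          · exact Or.inr (Or.inr (Or.inr h3))

lemma pair_last : ∀ (s L : List ℤ) {a : ℤ} {t : List ℤ},
    s ++ 1 :: 1 :: t = L ++ [a, 1] → a = 1 ∨ ∃ u v, L = u ++ 1 :: 1 :: v := by
  intro s
  induction s with
  | nil =>
      intro L a t h
      match L, h with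
      | [], h => simp only [List.nil_append, List.cons.injEq] at h; exact Or.inl h.1.symm
      | [l], h =>
          simp only [List.cons_append, List.nil_append, List.cons.injEq] at h
          exact Or.inl h.2.1.symm
      | l :: l' :: L'', h =>
          simp only [List.nil_append, List.cons_append, List.cons.injEq] at h
          exact Or.inr ⟨[], L'', by rw [← h.1, ← h.2.1]; rfl⟩
  | cons x s' ih =>
      intro L a t h
      match L, h with
      | [], h =>
          exfalso
          have := congrArg List.length h
          simp [List.length_append] at this
          omega
      | l :: L', h =>
          simp only [List.cons_append, List.cons.injEq] at h
          rcases ih L' h.2 with h3 | ⟨u, v, h3⟩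
          · exact Or.inl h3
          · exact Or.inr ⟨l :: u, v, by rw [h3]; rfl⟩

def Bad (Q : List ℤ) : Prop :=
  (∃ a ∈ Q, a ≤ 0) ∨ ∃ s t, Q = s ++ 1 :: 1 :: t

lemma step_bad {Q P : List ℤ} (h : ContractionStep Q P) (hb : Bad Q) : Bad P := by
  cases h with
  | mid L R a b =>
      rcases hb with ⟨e, he, he0⟩ | ⟨s, t, hst⟩
      · simp only [List.mem_append, List.mem_cons] at he
        rcases he with he | rfl | rfl | rfl | he
        · exact Or.inl ⟨e, by simp [he], he0⟩
        · exact Or.inl ⟨e - 1, by simp, by omega⟩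
        · omega
        · exact Or.inl ⟨e - 1, by simp, by omega⟩
        · exact Or.inl ⟨e, by simp [he], he0⟩
      · rcases pair_locate L s hst.symm with rfl | rfl | ⟨u, v, rfl⟩ | ⟨u, v, rfl⟩
        · exact Or.inl ⟨0, by simp, le_refl 0⟩
        · exact Or.inl ⟨0, by simp, le_refl 0⟩
        · exact Or.inr ⟨u, v ++ (a - 1) :: (b - 1) :: R, by simp⟩
        · exact Or.inr ⟨L ++ (a - 1) :: (b - 1) :: u, v, by simp⟩
  | head b R =>
      rcases hb with ⟨e, he, he0⟩ | ⟨s, t, hst⟩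
      · simp only [List.mem_cons] at he
        rcases he with rfl | rfl | he
        · omega
        · exact Or.inl ⟨e - 1, by simp, by omega⟩
        · exact Or.inl ⟨e, by simp [he], he0⟩
      · match s, hst with
        | [], hst =>
            simp only [List.nil_append, List.cons.injEq] at hst
            exact Or.inl ⟨b - 1, by simp, by omega⟩
        | [u], hst =>
            simp only [List.cons_append, List.nil_append, List.cons.injEq] at hst
            obtain ⟨-, rfl, -⟩ := hst
            exact Or.inl ⟨0, by simp, le_refl 0⟩
        | u :: u' :: s', hst =>
            simp only [List.cons_append, List.cons.injEq] at hst
            obtain ⟨-, rfl, hR⟩ := hst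
            exact Or.inr ⟨(b - 1) :: s', t, by simp [hR]⟩
  | last L a =>
      rcases hb with ⟨e, he, he0⟩ | ⟨s, t, hst⟩
      · simp only [List.mem_append, List.mem_cons, List.not_mem_nil, or_false] at he
        rcases he with he | rfl | rfl
        · exact Or.inl ⟨e, by simp [he], he0⟩
        · exact Or.inl ⟨e - 1, by simp, by omega⟩
        · omega
      · rcases pair_last s L hst.symm with rfl | ⟨u, v, rfl⟩
        · exact Or.inl ⟨0, by simp, le_refl 0⟩
        · exact Or.inr ⟨u, v ++ [a - 1], by simp⟩
  | single =>
      rcases hb with ⟨e, he, he0⟩ | ⟨s, t, hst⟩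
      · simp only [List.mem_singleton] at he; omega
      · exfalso
        have := congrArg List.length hst
        simp [List.length_append] at this
        omega

lemma not_bad {Q : List ℤ} (h : ContractsToPoint Q) : ¬ Bad Q := by
  induction h using Relation.ReflTransGen.head_induction_on with
  | refl =>
      rintro (⟨e, he, -⟩ | ⟨s, t, hst⟩)
      · simp at he
      · have := congrArg List.length hst
        simp [List.length_append] at this
  | head hstep _ ih => exact fun hb => ih (step_bad hstep hb)

lemma one_mem {Q : List ℤ} (h : ContractsToPoint Q) (hne : Q ≠ []) : (1 : ℤ) ∈ Q := by
  rcases Relation.ReflTransGen.cases_head h with rfl | ⟨P, hstep, -⟩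
  · exact absurd rfl hne
  · cases hstep <;> simp

lemma count_mid_aux {L R : List ℤ} {a b : ℤ}
    (h : (L ++ a :: 1 :: b :: R).count 1 = 1) :
    (1:ℤ) ∉ L ∧ a ≠ 1 ∧ b ≠ 1 ∧ (1:ℤ) ∉ R := by
  simp only [List.count_append, List.count_cons, beq_iff_eq] at h
  rcases eq_or_ne a 1 with rfl | ha <;> rcases eq_or_ne b 1 with rfl | hb <;>
    simp_all <;> first
      | omega
      | exact ⟨List.count_eq_zero.mp (by omega), List.count_eq_zero.mp (by omega)⟩

lemma count_last_aux {L : List ℤ} {a : ℤ}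
    (h : (L ++ [a, 1]).count 1 = 1) :
    (1:ℤ) ∉ L ∧ a ≠ 1 := by
  simp only [List.count_append, List.count_cons, beq_iff_eq] at h
  rcases eq_or_ne a 1 with rfl | ha <;> simp_all
  exact List.count_eq_zero.mp (by omega)

lemma main_lemma : ∀ (n : ℕ) (A B : List ℤ), A.length + B.length ≤ n →
    (∀ c ∈ A, (2 : ℤ) ≤ c) → (∀ c ∈ B, (2 : ℤ) ≤ c) →
    ContractsToPoint (A.reverse ++ 1 :: B) → Form A B := by
  intro n
  induction n with
  | zero =>
      intro A B hlen _ _ _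
      have hA : A = [] := List.eq_nil_of_length_eq_zero (by omega)
      have hB : B = [] := List.eq_nil_of_length_eq_zero (by omega)
      rw [hA, hB]; exact form_nil
  | succ n IH =>
      intro A B hlen h2A h2B hc
      have h1A : (1 : ℤ) ∉ A := fun hm => by have := h2A 1 hm; omega
      have h1B : (1 : ℤ) ∉ B := fun hm => by have := h2B 1 hm; omega
      have h1Ar : (1 : ℤ) ∉ A.reverse := by simpa using h1A
      rcases Relation.ReflTransGen.cases_head hc with habs | ⟨P, hstep, hcP⟩
      · exfalso
        have := congrArg List.length habs
        simp [List.length_append] at this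
      · generalize hq : A.reverse ++ 1 :: B = Q0 at hstep
        cases hstep with
        | mid L R a b =>
            -- hq : A.reverse ++ 1 :: B = L ++ a :: 1 :: b :: R
            have hcnt : (L ++ a :: 1 :: b :: R).count 1 = 1 := by
              rw [← hq]
              simp [List.count_append, List.count_cons, List.count_eq_zero_of_not_mem h1Ar,
                List.count_eq_zero_of_not_mem h1B]
            obtain ⟨h1L, ha1, hb1, h1R⟩ := count_mid_aux hcnt
            have hq' : A.reverse ++ 1 :: B = (L ++ [a]) ++ 1 :: (b :: R) := by
              rw [hq]; simp
            obtain ⟨hAr, hBr⟩ := split_one A.reverse (L ++ [a]) hq' h1Ar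
              (by simp [h1L, ha1, List.mem_append]; tauto)
            have hA : A = a :: L.reverse := by
              have := congrArg List.reverse hAr
              simpa using this
            have ha2 : (2 : ℤ) ≤ a := h2A a (by rw [hA]; exact List.mem_cons_self)
            have hb2 : (2 : ℤ) ≤ b := h2B b (by rw [hBr]; exact List.mem_cons_self)
            have hlenA : A.length = L.length + 1 := by
              rw [hA]; simp
            have hlenB : B.length = R.length + 1 := by
              rw [hBr]; simp
            rcases eq_or_lt_of_le ha2 with ha2' | ha3
            · rcases eq_or_lt_of_le hb2 with hb2' | hb3
              · -- a = 2, b = 2 : contradiction via adjacent pair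
                exfalso
                refine not_bad hcP (Or.inr ⟨L, R, ?_⟩)
                rw [← ha2', ← hb2']; norm_num
              · -- a = 2, b ≥ 3
                have hP : L ++ (a - 1) :: (b - 1) :: R
                    = L.reverse.reverse ++ 1 :: ((b - 1) :: R) := by
                  rw [← ha2']; norm_num
                have hform := IH L.reverse ((b - 1) :: R)
                  (by simp; omega)
                  (fun c hm => h2A c (by rw [hA]; exact List.mem_cons_of_mem _ hm))
                  (by
                    intro c hm
                    rcases List.mem_cons.mp hm with rfl | hm'
                    · omega
                    · exact h2B c (by rw [hBr]; exact List.mem_cons_of_mem _ hm'))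
                  (by rw [← hP]; exact hcP)
                have h2 := form_swap (lop (form_swap hform))
                simp only [incHead] at h2
                have : b - 1 + 1 = b := by ring
                rw [this] at h2
                rw [hA, hBr, ← ha2']
                exact h2
            · rcases eq_or_lt_of_le hb2 with hb2' | hb3
              · -- a ≥ 3, b = 2
                have hP : L ++ (a - 1) :: (b - 1) :: R
                    = ((a - 1) :: L.reverse).reverse ++ 1 :: R := by
                  rw [← hb2']; simp
                have hform := IH ((a - 1) :: L.reverse) R
                  (by simp; omega)
                  (by
                    intro c hm
                    rcases List.mem_cons.mp hm with rfl | hm'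
                    · omega
                    · exact h2A c (by rw [hA]; exact List.mem_cons_of_mem _ hm'))
                  (fun c hm => h2B c (by rw [hBr]; exact List.mem_cons_of_mem _ hm))
                  (by rw [← hP]; exact hcP)
                have h2 := lop hform
                simp only [incHead] at h2
                have : a - 1 + 1 = a := by ring
                rw [this] at h2
                rw [hA, hBr, ← hb2']
                exact h2
              · -- a ≥ 3, b ≥ 3 : P has no (-1)-curve
                exfalso
                have hmem := one_mem hcP (by simp)
                simp only [List.mem_append, List.mem_cons] at hmem
                rcases hmem with hm | hm | hm | hm
                · exact h1L hm
                · omega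
                · omega
                · exact h1R hm
        | head b R =>
            -- hq : A.reverse ++ 1 :: B = 1 :: b :: R
            obtain ⟨hAr, hBr⟩ := split_one A.reverse [] (by rw [hq]; rfl) h1Ar (by simp)
            have hA : A = [] := by simpa using congrArg List.reverse hAr
            have hb2 : (2 : ℤ) ≤ b := h2B b (by rw [hBr]; exact List.mem_cons_self)
            rcases eq_or_lt_of_le hb2 with hb2' | hb3
            · have hP : (b - 1) :: R = ([] : List ℤ).reverse ++ 1 :: R := by
                rw [← hb2']; norm_num
              have hform := IH [] R (by rw [hA] at hlen; rw [hBr] at hlen; simp at hlen ⊢; omega)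
                (by simp)
                (fun c hm => h2B c (by rw [hBr]; exact List.mem_cons_of_mem _ hm))
                (by rw [← hP]; exact hcP)
              have h2 := lop hform
              simp only [incHead] at h2
              rw [hA, hBr, ← hb2']
              exact h2
            · exfalso
              have h1R : (1 : ℤ) ∉ R := fun hm => by
                have := h2B 1 (by rw [hBr]; exact List.mem_cons_of_mem _ hm); omega
              have hmem := one_mem hcP (by simp)
              simp only [List.mem_cons] at hmem
              rcases hmem with hm | hm
              · omega
              · exact h1R hm
        | last L a =>
            -- hq : A.reverse ++ 1 :: B = L ++ [a, 1]
            have hcnt : (L ++ [a, 1]).count 1 = 1 := by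
              rw [← hq]
              simp [List.count_append, List.count_cons, List.count_eq_zero_of_not_mem h1Ar,
                List.count_eq_zero_of_not_mem h1B]
            obtain ⟨h1L, ha1⟩ := count_last_aux hcnt
            have hq' : A.reverse ++ 1 :: B = (L ++ [a]) ++ 1 :: ([] : List ℤ) := by
              rw [hq]; simp
            obtain ⟨hAr, hBr⟩ := split_one A.reverse (L ++ [a]) hq' h1Ar
              (by simp [h1L, ha1, List.mem_append]; tauto)
            have hA : A = a :: L.reverse := by
              simpa using congrArg List.reverse hAr
            have ha2 : (2 : ℤ) ≤ a := h2A a (by rw [hA]; exact List.mem_cons_self)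
            rcases eq_or_lt_of_le ha2 with ha2' | ha3
            · have hP : L ++ [a - 1] = L.reverse.reverse ++ 1 :: ([] : List ℤ) := by
                rw [← ha2']; norm_num
              have hform := IH L.reverse []
                (by rw [hA] at hlen; rw [hBr] at hlen; simp at hlen ⊢; omega)
                (fun c hm => h2A c (by rw [hA]; exact List.mem_cons_of_mem _ hm))
                (by simp)
                (by rw [← hP]; exact hcP)
              have h2 := form_swap (lop (form_swap hform))
              simp only [incHead] at h2
              rw [hA, hBr, ← ha2']
              exact h2
            · exfalso
              have hmem := one_mem hcP (by simp)
              simp only [List.mem_append, List.mem_cons] at hmem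
              rcases hmem with hm | hm
              · exact h1L hm
              · simp at hm; omega
        | single =>
            obtain ⟨hAr, hBr⟩ := split_one A.reverse [] (by rw [hq]; rfl) h1Ar (by simp)
            have hA : A = [] := by simpa using congrArg List.reverse hAr
            rw [hA, hBr]; exact form_nil

/-- Every weight list contracting to a smooth point and containing a unique
`(-1)`-curve is, up to reversal, of one of the two types `chainType1`
(with `k ≥ 1`, `x ≥ -1`) or `chainType2` (with `k ≥ 0`, `x ≥ 0`). -/
theorem chain_classification (Q : List ℤ) (hQ : ContractsToPoint Q)
    (huniq : Q.count 1 = 1) :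
    (∃ (ps : List (ℕ × ℕ)) (x : ℤ), ps ≠ [] ∧ -1 ≤ x ∧
      (Q = chainType1 ps x ∨ Q = (chainType1 ps x).reverse)) ∨
    (∃ (ps : List (ℕ × ℕ)) (x : ℕ),
      Q = chainType2 ps x ∨ Q = (chainType2 ps x).reverse) := by
  have hmem : (1 : ℤ) ∈ Q := by
    rw [← List.count_pos_iff]
    omega
  obtain ⟨s, t, rfl⟩ := List.append_of_mem hmem
  obtain ⟨h1s, h1t⟩ : (1 : ℤ) ∉ s ∧ (1 : ℤ) ∉ t := by
    simp only [List.count_append, List.count_cons, beq_iff_eq] at huniq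
    simp at huniq
    exact ⟨List.count_eq_zero.mp (by omega), List.count_eq_zero.mp (by omega)⟩
  have hpos : ∀ c ∈ s ++ 1 :: t, (1 : ℤ) ≤ c := by
    intro c hc
    by_contra hc0
    exact not_bad hQ (Or.inl ⟨c, hc, by omega⟩)
  have h2s : ∀ c ∈ s.reverse, (2 : ℤ) ≤ c := by
    intro c hc
    rw [List.mem_reverse] at hc
    have := hpos c (by simp [hc])
    have : c ≠ 1 := fun h => h1s (h ▸ hc)
    omega
  have h2t : ∀ c ∈ t, (2 : ℤ) ≤ c := by
    intro c hc
    have := hpos c (by simp [hc])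
    have : c ≠ 1 := fun h => h1t (h ▸ hc)
    omega
  have hform : Form s.reverse t :=
    main_lemma (s.length + t.length) s.reverse t (by simp) h2s h2t
      (by simpa using hQ)
  rcases hform with ⟨ps, x, h1, h2, ⟨hA, hB⟩ | ⟨hB, hA⟩⟩ | ⟨ps, x, ⟨hA, hB⟩ | ⟨hB, hA⟩⟩
  · refine Or.inl ⟨ps, x, h1, h2, Or.inl ?_⟩
    have hs : s = (evenSeg ps).reverse := by
      rw [← hA]; simp
    rw [hs, hB, chainType1]
  · refine Or.inl ⟨ps, x, h1, h2, Or.inr ?_⟩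
    have hs : s = (oddSeg ps ++ tailSeg x).reverse := by
      rw [← hA]; simp
    rw [hs, hB, chainType1]
    simp
  · refine Or.inr ⟨ps, x, Or.inl ?_⟩
    have hs : s = (oddSeg ps).reverse := by
      rw [← hA]; simp
    rw [hs, hB, chainType2]
  · refine Or.inr ⟨ps, x, Or.inr ?_⟩
    have hs : s = (evenSeg ps ++ List.replicate x 2).reverse := by
      rw [← hA]; simp
    rw [hs, hB, chainType2]
    simp
end
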